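/- arXiv:1301.5891 — 4 statements merged into one kernel-verified Lean document; each statement's English description precedes it below -/
import Mathlib

section
/- Let n ≥ 1 and let u : ℝⁿ → ℝ be three times continuously differentiable. For x ∈ ℝⁿ let D²u(x) denote the Hessian matrix of u at x (with entries the second partial derivatives ∂²u/∂xᵢ∂xⱼ), let Du(x) denote the gradient of u at x, and let V(x) = (cof D²u(x)) Du(x) be the vector field obtained by applying the cofactor matrix of the Hessian to the gradient. Then for every x ∈ ℝⁿ, det D²u(x) = (1/n) div V(x), where div V(x) = ∑_{i=1}^{n} ∂Vᵢ/∂xᵢ(x). -/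
open Matrix

/-!
By cofactor expansion along the `i`-th row, `Vᵢ` is the determinant of `D²u` with its `i`-th row
replaced by `Du`. Differentiating this determinant row by row in the direction `eᵢ`, the replaced
row contributes `det D²u` (as `∂ᵢ Du` is the `i`-th row of `D²u`), once for each `i`. Every other
contribution is a determinant with `Du` in row `i` and `∂ᵢ∂ₖ Du` in row `k`; since third derivatives
are symmetric, exchanging the roles of `i` and `k` swaps two rows, so these terms cancel in pairs.
-/

theorem Finset.sum_sum_eq_zero_of_antisymm {ι M : Type*} [Fintype ι] [AddCommMonoid M]
    (f : ι → ι → M) (hf : ∀ i k, f i k + f k i = 0) (hdiag : ∀ i, f i i = 0) :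
    ∑ i, ∑ k, f i k = 0 := by
  rw [← Fintype.sum_prod_type']
  exact Finset.sum_ninvolution Prod.swap (fun p => hf p.1 p.2)
    (fun p hp hswap => hp (by rw [show p.2 = p.1 from congrArg Prod.fst hswap]; exact hdiag _))
    (fun _ => Finset.mem_univ _) Prod.swap_swap

namespace Matrix

section Algebra

variable {ι R : Type*} [Fintype ι] [DecidableEq ι] [CommRing R]

theorem sum_adjugate_transpose_mul_eq_det_updateRow (A : Matrix ι ι R) (b : ι → R) (i : ι) :
    ∑ j, A.adjugateᵀ i j * b j = (A.updateRow i b).det := by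
  rw [← det_transpose, ← updateCol_transpose, ← cramer_apply, cramer_eq_adjugate_mulVec,
    ← adjugate_transpose]
  rfl

theorem det_updateRow_updateRow_swap (A : Matrix ι ι R) {i k : ι} (hik : i ≠ k) (a b : ι → R) :
    ((A.updateRow i a).updateRow k b).det = -((A.updateRow k a).updateRow i b).det := by
  have hswap : (A.updateRow k a).updateRow i b
      = ((A.updateRow i a).updateRow k b).submatrix (Equiv.swap i k) id := by
    ext l j
    rcases eq_or_ne l i with rfl | hli
    · simp [updateRow_apply]
    rcases eq_or_ne l k with rfl | hlk
    · simp [updateRow_apply, hik, hli]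
    · simp [updateRow_apply, hli, hlk, Equiv.swap_apply_of_ne_of_ne]
  rw [hswap, det_permute, Equiv.Perm.sign_swap hik]
  simp

theorem sum_sum_det_updateRow_updateRow_eq_card_mul_det (H : Matrix ι ι R) (g : ι → R)
    (T : ι → Matrix ι ι R) (hT : ∀ i k, T i k = T k i) :
    ∑ i, ∑ k, ((H.updateRow i g).updateRow k ((T i).updateRow i (H i) k)).det
      = Fintype.card ι * H.det := by
  set Q : ι → ι → R := fun i k =>
    if i = k then 0 else ((H.updateRow i g).updateRow k (T i k)).det
  have hQ : ∀ i k, Q i k + Q k i = 0 := by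
    intro i k
    rcases eq_or_ne i k with rfl | hik
    · simp [Q]
    · simp only [Q, if_neg hik, if_neg hik.symm]
      rw [hT k i, det_updateRow_updateRow_swap _ hik.symm, add_neg_cancel]
  have hsplit : ∀ i k, ((H.updateRow i g).updateRow k ((T i).updateRow i (H i) k)).det
      = (if k = i then H.det else 0) + Q i k := by
    intro i k
    rcases eq_or_ne k i with rfl | hki
    · simp [Q]
    · simp [Q, hki, hki.symm]
  simp_rw [hsplit, Finset.sum_add_distrib, Finset.sum_ite_eq', Finset.mem_univ, if_true,
    Finset.sum_sum_eq_zero_of_antisymm Q hQ (by simp [Q]), Finset.sum_const, Finset.card_univ,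
    nsmul_eq_mul, add_zero]

end Algebra

noncomputable def detRowContinuousMultilinear {𝕜 ι : Type*} [NontriviallyNormedField 𝕜]
    [Fintype ι] [DecidableEq ι] : ContinuousMultilinearMap 𝕜 (fun _ : ι => ι → 𝕜) 𝕜 where
  toMultilinearMap := detRowAlternating.toMultilinearMap
  cont := continuous_id.matrix_det

end Matrix

theorem fderiv_det_apply {𝕜 E ι : Type*} [NontriviallyNormedField 𝕜] [NormedAddCommGroup E]
    [NormedSpace 𝕜 E] [Fintype ι] [DecidableEq ι] {M : E → Matrix ι ι 𝕜} {x : E}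
    (hM : ∀ k j, DifferentiableAt 𝕜 (fun y => M y k j) x) (v : E) :
    fderiv 𝕜 (fun y => (M y).det) x v
      = ∑ k, ((M x).updateRow k fun j => fderiv 𝕜 (fun y => M y k j) x v).det := by
  have hrow : ∀ k, HasFDerivAt (fun y => M y k)
      (ContinuousLinearMap.pi fun j => fderiv 𝕜 (fun y => M y k j) x) x :=
    fun k => hasFDerivAt_pi.2 fun j => (hM k j).hasFDerivAt
  have hdet : HasFDerivAt (fun y => (M y).det) _ x :=
    HasFDerivAt.multilinear_comp detRowContinuousMultilinear hrow
  rw [hdet.fderiv]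
  simp only [_root_.sum_apply, ContinuousLinearMap.comp_apply,
    ContinuousMultilinearMap.toContinuousLinearMap_apply]
  rfl

section SecondDerivatives

variable {𝕜 E F : Type*} [NontriviallyNormedField 𝕜] [NormedAddCommGroup E] [NormedSpace 𝕜 E]
  [NormedAddCommGroup F] [NormedSpace 𝕜 F] {f : E → F}

theorem ContDiff.fderiv_right_apply {m n : WithTop ℕ∞} (hf : ContDiff 𝕜 n f) (hmn : m + 1 ≤ n)
    (v : E) : ContDiff 𝕜 m fun y => fderiv 𝕜 f y v :=
  (hf.fderiv_right hmn).clm_apply contDiff_const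

theorem ContDiffAt.fderiv_fderiv_apply_comm [IsRCLikeNormedField 𝕜] {x : E}
    (hf : ContDiffAt 𝕜 2 f x) (v w : E) :
    fderiv 𝕜 (fun y => fderiv 𝕜 f y v) x w = fderiv 𝕜 (fun y => fderiv 𝕜 f y w) x v := by
  have hdiff : DifferentiableAt 𝕜 (fderiv 𝕜 f) x :=
    (hf.fderiv_right (m := 1) le_rfl).differentiableAt one_ne_zero
  rw [fderiv_clm_apply hdiff (differentiableAt_const v),
    fderiv_clm_apply hdiff (differentiableAt_const w)]
  simpa using hf.isSymmSndFDerivAt (by simp) w v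

end SecondDerivatives

section HessianAlong

variable {E ι : Type*} [NormedAddCommGroup E] [NormedSpace ℝ E] [Fintype ι] [DecidableEq ι]

noncomputable def gradAlong (e : ι → E) (u : E → ℝ) (y : E) : ι → ℝ :=
  fun j => fderiv ℝ u y (e j)

noncomputable def hessianAlong (e : ι → E) (u : E → ℝ) (y : E) : Matrix ι ι ℝ :=
  of fun k j => fderiv ℝ (fun z => fderiv ℝ u z (e j)) y (e k)

theorem sum_fderiv_det_updateRow_hessianAlong (e : ι → E) {u : E → ℝ} (hu : ContDiff ℝ 3 u)
    (x : E) :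
    ∑ i, fderiv ℝ (fun y => ((hessianAlong e u y).updateRow i (gradAlong e u y)).det) x (e i)
      = Fintype.card ι * (hessianAlong e u x).det := by
  have hgrad : ∀ j, ContDiff ℝ 2 fun y => gradAlong e u y j :=
    fun j => hu.fderiv_right_apply (by norm_num) (e j)
  have hhess : ∀ k j, ContDiff ℝ 1 fun y => hessianAlong e u y k j :=
    fun k j => (hgrad j).fderiv_right_apply (by norm_num) (e k)
  set T : ι → Matrix ι ι ℝ :=
    fun i => of fun k j => fderiv ℝ (fun y => hessianAlong e u y k j) x (e i)
  have hT : ∀ i k, T i k = T k i := fun i k =>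
    funext fun j => (hgrad j).contDiffAt.fderiv_fderiv_apply_comm (e k) (e i)
  have hentry : ∀ i k j, DifferentiableAt ℝ
      (fun y => (hessianAlong e u y).updateRow i (gradAlong e u y) k j) x := by
    intro i k j
    rcases eq_or_ne k i with rfl | hki
    · simpa [updateRow_apply] using (hgrad j).differentiable (by norm_num) x
    · simpa [updateRow_apply, hki] using (hhess k j).differentiable (by norm_num) x
  have hrow : ∀ i,
      fderiv ℝ (fun y => ((hessianAlong e u y).updateRow i (gradAlong e u y)).det) x (e i)
        = ∑ k, (((hessianAlong e u x).updateRow i (gradAlong e u x)).updateRow k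
            ((T i).updateRow i (hessianAlong e u x i) k)).det := by
    intro i
    rw [fderiv_det_apply (hentry i)]
    refine Finset.sum_congr rfl fun k _ => ?_
    congr 2
    funext j
    rcases eq_or_ne k i with rfl | hki
    · simp only [updateRow_self]
      rfl
    · simp only [updateRow_ne hki, T, of_apply]
  simp_rw [hrow]
  exact sum_sum_det_updateRow_updateRow_eq_card_mul_det _ _ T hT

end HessianAlong

/-- Divergence form of the Monge–Ampère operator: for a `C³` function
`u : ℝⁿ → ℝ` with gradient `Du`, Hessian matrix `Hess`, and vector field
`V = (cof Hess) Du` (cofactor matrix of the Hessian applied to the gradient),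
one has `det D²u(x) = (1/n) div V(x)`. -/
theorem det_hessian_eq_inv_n_mul_div
    (n : ℕ) (hn : 1 ≤ n) (u : EuclideanSpace ℝ (Fin n) → ℝ)
    (hu : ContDiff ℝ 3 u)
    (Du : EuclideanSpace ℝ (Fin n) → Fin n → ℝ)
    (hDu : ∀ x i, Du x i = fderiv ℝ u x (EuclideanSpace.single i 1))
    (Hess : EuclideanSpace ℝ (Fin n) → Matrix (Fin n) (Fin n) ℝ)
    (hHess : ∀ x i j, Hess x i j =
      fderiv ℝ (fun y => fderiv ℝ u y (EuclideanSpace.single j 1)) x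
        (EuclideanSpace.single i 1))
    (V : EuclideanSpace ℝ (Fin n) → Fin n → ℝ)
    (hV : ∀ x i, V x i = ∑ j : Fin n, ((Hess x).adjugate)ᵀ i j * Du x j)
    (x : EuclideanSpace ℝ (Fin n)) :
    (Hess x).det =
      (1 / (n : ℝ)) *
        ∑ i : Fin n, fderiv ℝ (fun y => V y i) x (EuclideanSpace.single i 1) := by
  set e : Fin n → EuclideanSpace ℝ (Fin n) := fun i => EuclideanSpace.single i 1
  obtain rfl : Du = gradAlong e u := funext fun y => funext (hDu y)
  obtain rfl : Hess = hessianAlong e u := funext fun y => funext fun i => funext (hHess y i)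
  obtain rfl : V = fun y i => ((hessianAlong e u y).updateRow i (gradAlong e u y)).det :=
    funext fun y => funext fun i =>
      (hV y i).trans (sum_adjugate_transpose_mul_eq_det_updateRow _ _ i)
  have hn' : (n : ℝ) ≠ 0 := Nat.cast_ne_zero.mpr (Nat.one_le_iff_ne_zero.mp hn)
  rw [sum_fderiv_det_updateRow_hessianAlong e hu x, Fintype.card_fin]
  field_simp
end

section
/- For any two 3×3 real matrices η and τ, ‖cof η − cof τ‖∞ ≤ 4 (‖η‖∞ + ‖τ‖∞) ‖η − τ‖∞, where ‖M‖∞ = max_{i,j} |M_{ij}| is the entrywise sup norm. -/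
/-!
Each entry of the adjugate of a `3 × 3` matrix is, up to sign, a `2 × 2` minor `ad - bc`, and
`ad - a'd' = a (d - d') + (a - a') d'` bounds the change of each product by
`(‖η‖∞ + ‖τ‖∞) ‖η - τ‖∞`. This gives the constant `2` in place of `4`.
-/

open Matrix

section EntrywiseSupNorm

attribute [local instance] Matrix.seminormedAddCommGroup

variable {R : Type*}

theorem Matrix.iSup_iSup_norm_eq_norm {m n : Type*} [Fintype m] [Fintype n]
    [SeminormedAddCommGroup R] (A : Matrix m n R) : ⨆ i, ⨆ j, ‖A i j‖ = ‖A‖ :=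
  le_antisymm
    (Real.iSup_le (fun _ => Real.iSup_le (fun _ => norm_entry_le_entrywise_sup_norm A)
      (norm_nonneg A)) (norm_nonneg A))
    ((norm_le_iff (Real.iSup_nonneg fun _ => Real.iSup_nonneg fun _ => norm_nonneg _)).2
      fun i j => (le_ciSup (Finite.bddAbove_range _) j).trans
        (le_ciSup (f := fun i => ⨆ j, ‖A i j‖) (Finite.bddAbove_range _) i))

theorem Matrix.norm_submatrix_le {l m n o : Type*} [Fintype l] [Fintype m] [Fintype n]
    [Fintype o] [SeminormedAddCommGroup R] (A : Matrix m n R) (f : l → m) (g : o → n) :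
    ‖A.submatrix f g‖ ≤ ‖A‖ :=
  (norm_le_iff (norm_nonneg A)).2 fun _ _ => norm_entry_le_entrywise_sup_norm A

variable [NormedCommRing R]

theorem norm_mul_sub_mul_le (a b c d : R) :
    ‖a * b - c * d‖ ≤ ‖a‖ * ‖b - d‖ + ‖a - c‖ * ‖d‖ :=
  calc ‖a * b - c * d‖ = ‖a * (b - d) + (a - c) * d‖ := by congr 1; ring
    _ ≤ ‖a‖ * ‖b - d‖ + ‖a - c‖ * ‖d‖ :=
      (norm_add_le _ _).trans (add_le_add (norm_mul_le _ _) (norm_mul_le _ _))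

theorem Matrix.norm_det_fin_two_sub_le (A B : Matrix (Fin 2) (Fin 2) R) :
    ‖A.det - B.det‖ ≤ 2 * (‖A‖ + ‖B‖) * ‖A - B‖ := by
  have hA (i j) : ‖A i j‖ ≤ ‖A‖ := norm_entry_le_entrywise_sup_norm A
  have hB (i j) : ‖B i j‖ ≤ ‖B‖ := norm_entry_le_entrywise_sup_norm B
  have hAB (i j) : ‖A i j - B i j‖ ≤ ‖A - B‖ := norm_entry_le_entrywise_sup_norm (A - B)
  have hprod (i j k l) : ‖A i j * A k l - B i j * B k l‖ ≤ (‖A‖ + ‖B‖) * ‖A - B‖ := by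
    refine (norm_mul_sub_mul_le _ _ _ _).trans ?_
    rw [add_mul, mul_comm ‖B‖]
    gcongr
    · exact hA i j
    · exact hAB k l
    · exact hAB i j
    · exact hB k l
  rw [det_fin_two, det_fin_two, sub_sub_sub_comm]
  linarith [norm_sub_le (A 0 0 * A 1 1 - B 0 0 * B 1 1) (A 0 1 * A 1 0 - B 0 1 * B 1 0),
    hprod 0 0 1 1, hprod 0 1 1 0]

theorem Matrix.norm_adjugate_fin_three_sub_le (A B : Matrix (Fin 3) (Fin 3) R) :
    ‖adjugate A - adjugate B‖ ≤ 2 * (‖A‖ + ‖B‖) * ‖A - B‖ := by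
  refine (norm_le_iff (by positivity)).2 fun i j => ?_
  rw [sub_apply, adjugate_fin_succ_eq_det_submatrix, adjugate_fin_succ_eq_det_submatrix,
    ← mul_sub]
  calc ‖(-1) ^ (j + i : ℕ) * (det (A.submatrix j.succAbove i.succAbove) -
          det (B.submatrix j.succAbove i.succAbove))‖
      = ‖det (A.submatrix j.succAbove i.succAbove) -
          det (B.submatrix j.succAbove i.succAbove)‖ := by
        rcases neg_one_pow_eq_or R (j + i : ℕ) with h | h <;> simp [h, norm_sub_rev]
    _ ≤ 2 * (‖A.submatrix j.succAbove i.succAbove‖ + ‖B.submatrix j.succAbove i.succAbove‖) *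
          ‖A.submatrix j.succAbove i.succAbove - B.submatrix j.succAbove i.succAbove‖ :=
        norm_det_fin_two_sub_le _ _
    _ ≤ 2 * (‖A‖ + ‖B‖) * ‖A - B‖ := by
        gcongr
        · exact norm_submatrix_le A _ _
        · exact norm_submatrix_le B _ _
        · exact norm_submatrix_le (A - B) _ _

end EntrywiseSupNorm

/-- For `3 × 3` real matrices `η`, `τ`, the cofactor matrices satisfy
`‖cof η - cof τ‖∞ ≤ 4 (‖η‖∞ + ‖τ‖∞) ‖η - τ‖∞` in the entrywise sup norm,
where `cof M = (adjugate M)ᵀ`. -/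
theorem cof_sub_three_dim (η τ : Matrix (Fin 3) (Fin 3) ℝ) :
    (⨆ i : Fin 3, ⨆ j : Fin 3, |((η.adjugate)ᵀ - (τ.adjugate)ᵀ) i j|) ≤
      4 * ((⨆ i : Fin 3, ⨆ j : Fin 3, |η i j|) + (⨆ i : Fin 3, ⨆ j : Fin 3, |τ i j|)) *
        ⨆ i : Fin 3, ⨆ j : Fin 3, |(η - τ) i j| := by
  let : SeminormedAddCommGroup (Matrix (Fin 3) (Fin 3) ℝ) := Matrix.seminormedAddCommGroup
  simp only [← Real.norm_eq_abs, iSup_iSup_norm_eq_norm, ← transpose_sub, norm_transpose]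
  calc ‖adjugate η - adjugate τ‖ ≤ 2 * (‖η‖ + ‖τ‖) * ‖η - τ‖ :=
        norm_adjugate_fin_three_sub_le η τ
    _ ≤ 4 * (‖η‖ + ‖τ‖) * ‖η - τ‖ := by gcongr; norm_num
end

section
/- Let n ≥ 1 and let A be a symmetric n×n real matrix. Suppose there are constants 0 < m' ≤ M' such that m' ‖z‖² ≤ ⟨A.mulVec z, z⟩ ≤ M' ‖z‖² for all z ∈ ℝⁿ (Euclidean norm and inner product). Then the adjugate of A satisfies ((m')ⁿ / M') ‖z‖² ≤ ⟨(adjugate A).mulVec z, z⟩ ≤ ((M')ⁿ / m') ‖z‖² for all z ∈ ℝⁿ. -/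
/-!
A symmetric `A` with `m' ≤ A ≤ M'` in the quadratic-form sense has its eigenvalues in `[m', M']`,
so `(m')ⁿ ≤ det A ≤ (M')ⁿ`. With `A w = z`, the quantity `⟨A⁻¹ z, z⟩ = ⟨w, z⟩` is the maximum of
`2⟨x, z⟩ - ⟨A x, x⟩` over `x`; evaluating at `x = z / M'` and bounding at `x = w` by
`2⟨w, z⟩ - m' ‖w‖² ≤ ‖z‖² / m'` puts it in `[‖z‖² / M', ‖z‖² / m']`. Multiply the two ranges,
since `adjugate A = det A • A⁻¹`.
-/

open Matrix

namespace Matrix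

variable {n : Type*} [Fintype n]

theorem IsSymm.mulVec_dotProduct_comm {R : Type*} [CommSemiring R] {A : Matrix n n R}
    (hA : A.IsSymm) (x y : n → R) : A *ᵥ x ⬝ᵥ y = x ⬝ᵥ A *ᵥ y := by
  rw [← vecMul_transpose, hA.eq, dotProduct_mulVec]

section OrderedField

variable {R : Type*} [Field R] [LinearOrder R] [IsStrictOrderedRing R]

theorem dotProduct_self_nonneg (v : n → R) : 0 ≤ v ⬝ᵥ v :=
  Fintype.sum_nonneg fun i => mul_self_nonneg (v i)

theorem dotProduct_self_pos {v : n → R} (hv : v ≠ 0) : 0 < v ⬝ᵥ v :=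
  (dotProduct_self_nonneg v).lt_of_ne' (mt dotProduct_self_eq_zero.mp hv)

theorem le_of_mulVec_eq_smul {A : Matrix n n R} {m μ : R} {v : n → R} (hv : v ≠ 0)
    (hAv : A *ᵥ v = μ • v) (h : ∀ z, m * (z ⬝ᵥ z) ≤ A *ᵥ z ⬝ᵥ z) : m ≤ μ := by
  have hmv := h v
  rw [hAv, smul_dotProduct, smul_eq_mul] at hmv
  exact le_of_mul_le_mul_right hmv (dotProduct_self_pos hv)

theorem ge_of_mulVec_eq_smul {A : Matrix n n R} {M μ : R} {v : n → R} (hv : v ≠ 0)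
    (hAv : A *ᵥ v = μ • v) (h : ∀ z, A *ᵥ z ⬝ᵥ z ≤ M * (z ⬝ᵥ z)) : μ ≤ M := by
  have hvM := h v
  rw [hAv, smul_dotProduct, smul_eq_mul] at hvM
  exact le_of_mul_le_mul_right hvM (dotProduct_self_pos hv)

theorem IsSymm.two_mul_dotProduct_sub_le {A : Matrix n n R} (hA : A.IsSymm)
    (hpos : ∀ z, 0 ≤ A *ᵥ z ⬝ᵥ z) {w z : n → R} (hw : A *ᵥ w = z) (x : n → R) :
    2 * (x ⬝ᵥ z) - A *ᵥ x ⬝ᵥ x ≤ w ⬝ᵥ z := by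
  have hdiff := hpos (x - w)
  simp only [mulVec_sub, sub_dotProduct, dotProduct_sub, hw] at hdiff
  rw [hA.mulVec_dotProduct_comm x w, hw, dotProduct_comm z x, dotProduct_comm z w] at hdiff
  linarith

theorem IsSymm.inv_mul_le_dotProduct_of_mulVec_eq {A : Matrix n n R} (hA : A.IsSymm)
    (hpos : ∀ z, 0 ≤ A *ᵥ z ⬝ᵥ z) {M : R} (hM : ∀ z, A *ᵥ z ⬝ᵥ z ≤ M * (z ⬝ᵥ z))
    {w z : n → R} (hw : A *ᵥ w = z) : M⁻¹ * (z ⬝ᵥ z) ≤ w ⬝ᵥ z := by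
  have hvar := hA.two_mul_dotProduct_sub_le hpos hw (M⁻¹ • z)
  rw [mulVec_smul, smul_dotProduct, dotProduct_smul, smul_dotProduct, smul_eq_mul,
    smul_eq_mul, smul_eq_mul] at hvar
  have hMz : M⁻¹ * (M⁻¹ * (A *ᵥ z ⬝ᵥ z)) ≤ M⁻¹ * (z ⬝ᵥ z) :=
    calc M⁻¹ * (M⁻¹ * (A *ᵥ z ⬝ᵥ z)) ≤ M⁻¹ * M⁻¹ * (M * (z ⬝ᵥ z)) := by
          rw [← mul_assoc]; exact mul_le_mul_of_nonneg_left (hM z) (mul_self_nonneg _)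
      _ = M⁻¹ * (z ⬝ᵥ z) := by
          rw [← mul_assoc, mul_right_comm M⁻¹ M⁻¹]
          nth_rw 2 [← inv_inv M]
          rw [mul_inv_mul_cancel]
  linarith

theorem dotProduct_le_inv_mul_of_mulVec_eq {A : Matrix n n R} {m : R} (hm : 0 < m)
    (h : ∀ z, m * (z ⬝ᵥ z) ≤ A *ᵥ z ⬝ᵥ z) {w z : n → R} (hw : A *ᵥ w = z) :
    w ⬝ᵥ z ≤ m⁻¹ * (z ⬝ᵥ z) := by
  have hww : m * (w ⬝ᵥ w) ≤ w ⬝ᵥ z := by simpa only [hw, dotProduct_comm w z] using h w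
  have hzw := dotProduct_self_nonneg (z - m • w)
  simp only [sub_dotProduct, dotProduct_sub, smul_dotProduct, dotProduct_smul, smul_eq_mul,
    dotProduct_comm z w] at hzw
  rw [le_inv_mul_iff₀ hm]
  nlinarith

theorem IsSymm.inv_rayleigh_bounds [DecidableEq n] {A : Matrix n n R} (hA : A.IsSymm)
    {m M : R} (hm : 0 < m)
    (h : ∀ z, m * (z ⬝ᵥ z) ≤ A *ᵥ z ⬝ᵥ z ∧ A *ᵥ z ⬝ᵥ z ≤ M * (z ⬝ᵥ z)) (z : n → R) :
    M⁻¹ * (z ⬝ᵥ z) ≤ A⁻¹ *ᵥ z ⬝ᵥ z ∧ A⁻¹ *ᵥ z ⬝ᵥ z ≤ m⁻¹ * (z ⬝ᵥ z) := by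
  have hdet : IsUnit A.det := by
    refine isUnit_iff_ne_zero.mpr fun h0 => ?_
    obtain ⟨v, hv, hAv⟩ := exists_mulVec_eq_zero_iff.mpr h0
    exact hm.not_ge (le_of_mulVec_eq_smul hv (by rw [hAv, zero_smul]) fun z => (h z).1)
  have hw : A *ᵥ (A⁻¹ *ᵥ z) = z := by rw [mulVec_mulVec, mul_nonsing_inv A hdet, one_mulVec]
  have hpos : ∀ z, 0 ≤ A *ᵥ z ⬝ᵥ z := fun z =>
    (mul_nonneg hm.le (dotProduct_self_nonneg z)).trans (h z).1
  exact ⟨hA.inv_mul_le_dotProduct_of_mulVec_eq hpos (fun z => (h z).2) hw,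
    dotProduct_le_inv_mul_of_mulVec_eq hm (fun z => (h z).1) hw⟩

end OrderedField

section Real

variable [DecidableEq n]

theorem IsHermitian.eigenvalues_mem_Icc {A : Matrix n n ℝ} (hA : A.IsHermitian) {m M : ℝ}
    (h : ∀ z, m * (z ⬝ᵥ z) ≤ A *ᵥ z ⬝ᵥ z ∧ A *ᵥ z ⬝ᵥ z ≤ M * (z ⬝ᵥ z)) (i : n) :
    hA.eigenvalues i ∈ Set.Icc m M := by
  have hv : ⇑(hA.eigenvectorBasis i) ≠ 0 := by
    simpa using hA.eigenvectorBasis.orthonormal.ne_zero i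
  exact ⟨le_of_mulVec_eq_smul hv (hA.mulVec_eigenvectorBasis i) fun z => (h z).1,
    ge_of_mulVec_eq_smul hv (hA.mulVec_eigenvectorBasis i) fun z => (h z).2⟩

theorem IsSymm.det_mem_Icc {A : Matrix n n ℝ} (hA : A.IsSymm) {m M : ℝ} (hm : 0 ≤ m)
    (h : ∀ z, m * (z ⬝ᵥ z) ≤ A *ᵥ z ⬝ᵥ z ∧ A *ᵥ z ⬝ᵥ z ≤ M * (z ⬝ᵥ z)) :
    A.det ∈ Set.Icc (m ^ Fintype.card n) (M ^ Fintype.card n) := by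
  have hA' : A.IsHermitian := isHermitian_iff_isSymm.mpr hA
  have heig := hA'.eigenvalues_mem_Icc h
  rw [hA'.det_eq_prod_eigenvalues, RCLike.ofReal_real_eq_id]
  constructor
  · simpa using Finset.prod_le_prod (s := .univ) (fun _ _ => hm) fun i _ => (heig i).1
  · simpa using Finset.prod_le_prod (s := .univ) (fun i _ => hm.trans (heig i).1)
      fun i _ => (heig i).2

end Real

end Matrix

theorem adjugate_rayleigh_bounds_general (n : ℕ)
    (A : Matrix (Fin n) (Fin n) ℝ) (hA : A.IsSymm)
    (m' M' : ℝ) (hm : 0 < m') (hmM : m' ≤ M')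
    (h : ∀ z : Fin n → ℝ,
      m' * (z ⬝ᵥ z) ≤ A.mulVec z ⬝ᵥ z ∧ A.mulVec z ⬝ᵥ z ≤ M' * (z ⬝ᵥ z)) :
    ∀ z : Fin n → ℝ,
      (m' ^ n / M') * (z ⬝ᵥ z) ≤ A.adjugate.mulVec z ⬝ᵥ z ∧
      A.adjugate.mulVec z ⬝ᵥ z ≤ (M' ^ n / m') * (z ⬝ᵥ z) := by
  obtain ⟨hdet_ge, hdet_le⟩ : A.det ∈ Set.Icc (m' ^ n) (M' ^ n) := by
    simpa using hA.det_mem_Icc hm.le h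
  have hdet_pos : 0 < A.det := (pow_pos hm n).trans_le hdet_ge
  have hM : 0 < M' := hm.trans_le hmM
  intro z
  obtain ⟨hinv_ge, hinv_le⟩ := hA.inv_rayleigh_bounds hm h z
  have hadj : A.adjugate *ᵥ z ⬝ᵥ z = A.det * (A⁻¹ *ᵥ z ⬝ᵥ z) := by
    rw [← cramer_eq_adjugate_mulVec, ← det_smul_inv_mulVec_eq_cramer _ _ hdet_pos.ne'.isUnit,
      smul_dotProduct, smul_eq_mul]
  have hlower_nonneg : 0 ≤ M'⁻¹ * (z ⬝ᵥ z) := by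
    have := dotProduct_self_nonneg z
    positivity
  rw [hadj, div_eq_mul_inv, div_eq_mul_inv, mul_assoc, mul_assoc]
  exact ⟨mul_le_mul hdet_ge hinv_ge hlower_nonneg hdet_pos.le,
    mul_le_mul hdet_le hinv_le (hlower_nonneg.trans hinv_ge) (by positivity)⟩

/-- If `A` is a symmetric `n × n` real matrix whose Rayleigh quotient lies in
`[m', M']` with `0 < m' ≤ M'`, then the Rayleigh quotient of `adjugate A` (which
equals the cofactor matrix of `A`) lies in `[(m')ⁿ / M', (M')ⁿ / m']`.
Here `z ⬝ᵥ z = ‖z‖²` is the square of the Euclidean norm. -/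
theorem adjugate_rayleigh_bounds (n : ℕ) (hn : 1 ≤ n)
    (A : Matrix (Fin n) (Fin n) ℝ) (hA : A.IsSymm)
    (m' M' : ℝ) (hm : 0 < m') (hmM : m' ≤ M')
    (h : ∀ z : Fin n → ℝ,
      m' * (z ⬝ᵥ z) ≤ A.mulVec z ⬝ᵥ z ∧ A.mulVec z ⬝ᵥ z ≤ M' * (z ⬝ᵥ z)) :
    ∀ z : Fin n → ℝ,
      (m' ^ n / M') * (z ⬝ᵥ z) ≤ A.adjugate.mulVec z ⬝ᵥ z ∧
      A.adjugate.mulVec z ⬝ᵥ z ≤ (M' ^ n / m') * (z ⬝ᵥ z) :=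
  adjugate_rayleigh_bounds_general n A hA m' M' hm hmM h
end

section
/- Let n ≥ 1 and let A be a symmetric n×n real matrix such that m ‖z‖² ≤ ⟨A.mulVec z, z⟩ ≤ M ‖z‖² for all z ∈ ℝⁿ, where 0 < m ≤ M. Set ν = (M + m)/2. Then for all p, q ∈ ℝⁿ, |⟨(1 - ν⁻¹ • A).mulVec p, q⟩| ≤ ((M − m)/(M + m)) ‖p‖ ‖q‖; equivalently, the operator norm of I − ν⁻¹ A (as a map of Euclidean space) is at most (M − m)/(M + m) < 1. -/
open Matrix

private lemma sym_dot {n : ℕ} (B : Matrix (Fin n) (Fin n) ℝ) (hB : Bᵀ = B)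
    (x y : Fin n → ℝ) : B.mulVec x ⬝ᵥ y = B.mulVec y ⬝ᵥ x := by
  rw [dotProduct_comm, Matrix.dotProduct_mulVec, ← Matrix.vecMul_transpose, hB]

private lemma polar_bound {n : ℕ} (B : Matrix (Fin n) (Fin n) ℝ) (hB : Bᵀ = B)
    (c : ℝ) (hray : ∀ z : Fin n → ℝ, |B.mulVec z ⬝ᵥ z| ≤ c * (z ⬝ᵥ z))
    (p q : Fin n → ℝ) :
    |B.mulVec p ⬝ᵥ q| ≤ c / 2 * (p ⬝ᵥ p + q ⬝ᵥ q) := by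
  have h1 := hray (p + q)
  have h2 := hray (p - q)
  have e1 : B.mulVec (p + q) ⬝ᵥ (p + q)
      = B.mulVec p ⬝ᵥ p + 2 * (B.mulVec p ⬝ᵥ q) + B.mulVec q ⬝ᵥ q := by
    simp only [Matrix.mulVec_add, add_dotProduct, dotProduct_add, sym_dot B hB q p]
    ring
  have e2 : B.mulVec (p - q) ⬝ᵥ (p - q)
      = B.mulVec p ⬝ᵥ p - 2 * (B.mulVec p ⬝ᵥ q) + B.mulVec q ⬝ᵥ q := by
    simp only [Matrix.mulVec_sub, sub_dotProduct, dotProduct_sub, sym_dot B hB q p]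
    ring
  have s1 : (p + q) ⬝ᵥ (p + q) = p ⬝ᵥ p + 2 * (p ⬝ᵥ q) + q ⬝ᵥ q := by
    rw [add_dotProduct, dotProduct_add, dotProduct_add, dotProduct_comm q p]
    ring
  have s2 : (p - q) ⬝ᵥ (p - q) = p ⬝ᵥ p - 2 * (p ⬝ᵥ q) + q ⬝ᵥ q := by
    rw [sub_dotProduct, dotProduct_sub, dotProduct_sub, dotProduct_comm q p]
    ring
  rw [e1, s1] at h1
  rw [e2, s2] at h2
  rw [abs_le] at h1 h2 ⊢
  constructor <;> linarith [h1.1, h1.2, h2.1, h2.2]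

/-- Contraction estimate: if `A` is a symmetric `n × n` real matrix whose Rayleigh
quotient lies in `[m, M]` with `0 < m ≤ M`, and `ν = (M + m)/2`, then for all
`p, q ∈ ℝⁿ`, `|⟨(I - ν⁻¹ A) p, q⟩| ≤ ((M - m)/(M + m)) ‖p‖ ‖q‖`, where
`‖p‖ = √(p ⬝ᵥ p)` is the Euclidean norm. -/
theorem contraction_one_sub_smul (n : ℕ) (hn : 1 ≤ n)
    (A : Matrix (Fin n) (Fin n) ℝ) (hA : A.IsSymm)
    (m M : ℝ) (hm : 0 < m) (hmM : m ≤ M)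
    (h : ∀ z : Fin n → ℝ,
      m * (z ⬝ᵥ z) ≤ A.mulVec z ⬝ᵥ z ∧ A.mulVec z ⬝ᵥ z ≤ M * (z ⬝ᵥ z))
    (ν : ℝ) (hν : ν = (M + m) / 2) :
    ∀ p q : Fin n → ℝ,
      |((1 : Matrix (Fin n) (Fin n) ℝ) - ν⁻¹ • A).mulVec p ⬝ᵥ q| ≤
        (M - m) / (M + m) * Real.sqrt (p ⬝ᵥ p) * Real.sqrt (q ⬝ᵥ q) := by
  set B : Matrix (Fin n) (Fin n) ℝ := (1 : Matrix (Fin n) (Fin n) ℝ) - ν⁻¹ • A with hBdef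
  set c : ℝ := (M - m) / (M + m) with hc
  have hMm : (0:ℝ) < M + m := by linarith
  have hMm' : (M + m) ≠ 0 := ne_of_gt hMm
  have hν0 : ν ≠ 0 := by rw [hν]; positivity
  have hinv : ν⁻¹ = 2 / (M + m) := by rw [hν]; field_simp
  have hc0 : 0 ≤ c := by apply div_nonneg <;> linarith
  have hBsym : Bᵀ = B := by
    rw [hBdef, Matrix.transpose_sub, Matrix.transpose_one, Matrix.transpose_smul, hA.eq]
  have hBvec : ∀ z : Fin n → ℝ, B.mulVec z ⬝ᵥ z = z ⬝ᵥ z - ν⁻¹ * (A.mulVec z ⬝ᵥ z) := by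
    intro z
    rw [hBdef, Matrix.sub_mulVec, sub_dotProduct, Matrix.one_mulVec,
      Matrix.smul_mulVec, smul_dotProduct, smul_eq_mul]
  have hray : ∀ z : Fin n → ℝ, |B.mulVec z ⬝ᵥ z| ≤ c * (z ⬝ᵥ z) := by
    intro z
    have hz := h z
    have hz0 : (0:ℝ) ≤ z ⬝ᵥ z := by
      simp only [dotProduct]
      exact Finset.sum_nonneg fun i _ => mul_self_nonneg _
    rw [hBvec z, hinv, abs_le]
    constructor
    · rw [← sub_nonneg]
      have key : z ⬝ᵥ z - 2 / (M + m) * (A.mulVec z ⬝ᵥ z) - -(c * (z ⬝ᵥ z))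
          = 2 / (M + m) * (M * (z ⬝ᵥ z) - A.mulVec z ⬝ᵥ z) := by
        rw [hc]; field_simp; ring
      rw [key]
      have : 0 ≤ M * (z ⬝ᵥ z) - A.mulVec z ⬝ᵥ z := by linarith [hz.2]
      positivity
    · rw [← sub_nonneg]
      have key : c * (z ⬝ᵥ z) - (z ⬝ᵥ z - 2 / (M + m) * (A.mulVec z ⬝ᵥ z))
          = 2 / (M + m) * (A.mulVec z ⬝ᵥ z - m * (z ⬝ᵥ z)) := by
        rw [hc]; field_simp; ring
      rw [key]
      have : 0 ≤ A.mulVec z ⬝ᵥ z - m * (z ⬝ᵥ z) := by linarith [hz.1]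
      positivity
  intro p q
  have hp0 : (0:ℝ) ≤ p ⬝ᵥ p := by
    simp only [dotProduct]
    exact Finset.sum_nonneg fun i _ => mul_self_nonneg _
  have hq0 : (0:ℝ) ≤ q ⬝ᵥ q := by
    simp only [dotProduct]
    exact Finset.sum_nonneg fun i _ => mul_self_nonneg _
  rcases eq_or_lt_of_le hp0 with hp | hp
  · have hp' : p = 0 := dotProduct_self_eq_zero.mp hp.symm
    subst hp'
    simp
  rcases eq_or_lt_of_le hq0 with hq | hq
  · have hq' : q = 0 := dotProduct_self_eq_zero.mp hq.symm
    subst hq'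
    simp
  -- scaling trick
  set sp := Real.sqrt (p ⬝ᵥ p) with hsp
  set sq := Real.sqrt (q ⬝ᵥ q) with hsq
  have hsp0 : 0 < sp := Real.sqrt_pos.mpr hp
  have hsq0 : 0 < sq := Real.sqrt_pos.mpr hq
  set t : ℝ := Real.sqrt (sq / sp) with ht
  have ht0 : 0 < t := Real.sqrt_pos.mpr (by positivity)
  have ht2 : t ^ 2 = sq / sp := Real.sq_sqrt (by positivity)
  have key := polar_bound B hBsym c hray (t • p) (t⁻¹ • q)
  have e1 : B.mulVec (t • p) ⬝ᵥ (t⁻¹ • q) = B.mulVec p ⬝ᵥ q := by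
    rw [Matrix.mulVec_smul, smul_dotProduct, dotProduct_smul, smul_eq_mul, smul_eq_mul]
    field_simp
  have e2 : (t • p) ⬝ᵥ (t • p) = t ^ 2 * (p ⬝ᵥ p) := by
    rw [smul_dotProduct, dotProduct_smul, smul_eq_mul, smul_eq_mul]; ring
  have e3 : (t⁻¹ • q) ⬝ᵥ (t⁻¹ • q) = (t ^ 2)⁻¹ * (q ⬝ᵥ q) := by
    rw [smul_dotProduct, dotProduct_smul, smul_eq_mul, smul_eq_mul]; ring
  rw [e1, e2, e3, ht2] at key
  have hpp : p ⬝ᵥ p = sp ^ 2 := (Real.sq_sqrt hp0).symm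
  have hqq : q ⬝ᵥ q = sq ^ 2 := (Real.sq_sqrt hq0).symm
  have final : c / 2 * (sq / sp * (p ⬝ᵥ p) + (sq / sp)⁻¹ * (q ⬝ᵥ q)) = c * sp * sq := by
    rw [hpp, hqq]
    field_simp
    ring
  rw [final] at key
  exact key
end
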